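/- arXiv:1810.00616 — 4 statements merged into one kernel-verified Lean document; each statement's English description precedes it below -/
import Mathlib

section
/- For all nonnegative integers m, n, k, i, j with k ≤ min(m,n), 0 ≤ i ≤ m, 0 ≤ j ≤ n, and k ≤ i+j ≤ m+n-k, the two sums Σ_{l=0}^{k} (-1)^l · C(i+j-k, i-l) · C(m-l, k-l) · C(n-k+l, l) and Σ_{l=0}^{k} (-1)^l · C(i+j-k, i-l) · C(m-i, k-l) · C(n-j, l) are equal. -/
/-!
Write `s = i + j - k`. Vandermonde's identity `C(n-k+l, l) = ∑ₜ C(n-j, t) C(j+l-k, l-t)` and the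
trinomial revision `C(s, i-l) C(j+l-k, l-t) = C(s, i-t) C(i-t, i-l)` turn the first sum into
`∑ₜ C(n-j, t) C(s, i-t) ∑ₗ (-1)^l C(i-t, i-l) C(m-l, k-l)`. By inclusion–exclusion the inner sum is
`(-1)^t C(m-i, k-t)`: `∑ᵣ (-1)^r C(d, r) C(N+d-r, K-r) = C(N, K)` counts the `K`-subsets of an
`(N+d)`-set that avoid a fixed `d`-subset. Since `ch` vanishes outside its natural range, all sums can
be taken over `0 ≤ l, t ≤ k` without case distinctions.
-/

open Finset

/-- Integer binomial coefficient: `C(a,b) = 0` when `b < 0` or `b > a`. -/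
def ch (a b : ℤ) : ℤ := if 0 ≤ b ∧ b ≤ a then ((a.toNat).choose b.toNat : ℤ) else 0

/-- Clebsch-Gordan sum `c_{m,n,k}(i,j)`. -/
def cg (m n k i j : ℕ) : ℤ :=
  ∑ l ∈ Finset.range (k+1),
    (-1:ℤ)^l * ch ((i:ℤ)+(j:ℤ)-(k:ℤ)) ((i:ℤ)-(l:ℤ))
      * ch ((m:ℤ)-(l:ℤ)) ((k:ℤ)-(l:ℤ)) * ch ((n:ℤ)-(k:ℤ)+(l:ℤ)) (l:ℤ)

/-- Trinomial coefficient `(a+b+c)! / (a! b! c!)`. -/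
def mult (a b c : ℕ) : ℕ := (a+b+c).factorial / (a.factorial * b.factorial * c.factorial)

theorem ch_natCast (a b : ℕ) : ch a b = a.choose b := by
  unfold ch
  split_ifs with h
  · simp
  · rw [Nat.choose_eq_zero_of_lt (by omega), Nat.cast_zero]

theorem ch_of_neg {a b : ℤ} (hb : b < 0) : ch a b = 0 := if_neg (by omega)

theorem ch_of_lt {a b : ℤ} (h : a < b) : ch a b = 0 := if_neg (by omega)

theorem ch_natCast_sub (d r : ℕ) : ch d (d - r) = d.choose r := by
  rcases le_or_gt r d with h | h
  · rw [← Nat.cast_sub h, ch_natCast, Nat.choose_symm h]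
  · rw [ch_of_neg (by omega), Nat.choose_eq_zero_of_lt h, Nat.cast_zero]

theorem ch_mul_ch_sub (s x z : ℤ) : ch s x * ch (s - x) (z - x) = ch s z * ch z x := by
  by_cases h : 0 ≤ x ∧ x ≤ z ∧ z ≤ s
  · obtain ⟨hx, hxz, hzs⟩ := h
    lift x to ℕ using hx
    obtain ⟨y, rfl⟩ := Int.le.dest hxz
    obtain ⟨e, rfl⟩ := Int.le.dest hzs
    have key := Nat.choose_mul (n := x + y + e) (k := x + y) (s := x) (by omega)
    rw [show x + y + e - x = y + e by omega, Nat.add_sub_cancel_left] at key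
    rw [show (x : ℤ) + y + e - x = ((y + e : ℕ) : ℤ) by push_cast; ring,
      show (x : ℤ) + y - x = y by ring, ← Nat.cast_add, ← Nat.cast_add, ch_natCast, ch_natCast,
      ch_natCast, ch_natCast]
    exact_mod_cast key.symm
  · unfold ch
    split_ifs <;> omega

theorem ch_add_eq_sum {A B : ℤ} (hA : 0 ≤ A) (hB : 0 ≤ B) {K N : ℕ} (hKN : K ≤ N) :
    ch (A + B) K = ∑ t ∈ range (N + 1), ch A t * ch B (K - t) := by
  lift A to ℕ using hA
  lift B to ℕ using hB
  have hvan : ch (A + B) K = ∑ t ∈ range (K + 1), ch A t * ch B (K - t) := by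
    rw [← Nat.cast_add, ch_natCast, Nat.add_choose_eq,
      Nat.sum_antidiagonal_eq_sum_range_succ_mk, Nat.cast_sum]
    refine sum_congr rfl fun t ht => ?_
    rw [← Nat.cast_sub (by simpa [Nat.lt_succ_iff] using ht), ch_natCast, ch_natCast, Nat.cast_mul]
  rw [hvan]
  refine sum_subset (range_subset_range.2 (by omega)) fun t _ ht => ?_
  rw [ch_of_neg (b := (K : ℤ) - t) (by simp at ht; omega), mul_zero]

theorem sum_range_neg_one_pow_mul_choose_mul_choose (d N K : ℕ) :
    ∑ r ∈ range (K + 1), (-1 : ℤ) ^ r * d.choose r * (N + d - r).choose (K - r) = N.choose K := by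
  induction d generalizing N K with
  | zero => simp [sum_range_succ']
  | succ d ih =>
    cases K with
    | zero => simp
    | succ K =>
      -- Pascal's rule for `(d + 1).choose (r + 1)` leaves the instances at `(N, K)` and `(N + 1, K + 1)`.
      have h₁ := ih N K
      have h₂ := ih (N + 1) (K + 1)
      rw [sum_range_succ'] at h₂ ⊢
      simp only [Nat.choose_succ_succ', Nat.cast_add, pow_succ, Nat.choose_zero_right, Nat.sub_zero,
        pow_zero, Nat.cast_one, one_mul, mul_one, mul_neg, neg_mul, mul_add, add_mul, sum_add_distrib,
        sum_neg_distrib, Nat.add_sub_add_right, show ∀ r, N + 1 + d - (r + 1) = N + d - r by omega,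
        show N + (d + 1) = N + 1 + d by omega] at h₂ ⊢
      linear_combination h₂ - h₁

theorem sum_range_neg_one_pow_mul_ch_mul_ch {i m k t : ℕ} (hti : t ≤ i) (him : i ≤ m) (htk : t ≤ k) :
    ∑ l ∈ range (k + 1), (-1 : ℤ) ^ l * ch ((i : ℤ) - t) ((i : ℤ) - l) * ch ((m : ℤ) - l) ((k : ℤ) - l)
      = (-1) ^ t * ch ((m : ℤ) - i) ((k : ℤ) - t) := by
  obtain ⟨d, rfl⟩ := Nat.exists_eq_add_of_le hti
  obtain ⟨N, rfl⟩ := Nat.exists_eq_add_of_le him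
  obtain ⟨K, rfl⟩ := Nat.exists_eq_add_of_le htk
  rw [show t + K + 1 = t + (K + 1) by ring, sum_range_add, sum_eq_zero, zero_add]
  · rw [show ((t + d + N : ℕ) : ℤ) - (t + d : ℕ) = N by push_cast; ring,
      show ((t + K : ℕ) : ℤ) - t = K by push_cast; ring, ch_natCast,
      ← sum_range_neg_one_pow_mul_choose_mul_choose d N K, mul_sum]
    refine sum_congr rfl fun r hr => ?_
    rcases le_or_gt r d with hrd | hrd
    · rw [show ((t + d : ℕ) : ℤ) - t = d by push_cast; ring,
        show ((t + d : ℕ) : ℤ) - (t + r : ℕ) = d - r by push_cast; ring,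
        show ((t + d + N : ℕ) : ℤ) - (t + r : ℕ) = (N + d - r : ℕ) by
          rw [Nat.cast_sub (by omega)]; push_cast; ring,
        show ((t + K : ℕ) : ℤ) - (t + r : ℕ) = (K - r : ℕ) by
          push_cast [Nat.lt_succ_iff.1 (mem_range.1 hr)]; ring,
        ch_natCast_sub, ch_natCast, pow_add]
      ring
    · rw [show ((t + d : ℕ) : ℤ) - (t + r : ℕ) = d - r by push_cast; ring, ch_of_neg (by omega),
        Nat.choose_eq_zero_of_lt hrd]
      simp
  · intro l hl
    rw [ch_of_lt (by simp at hl; omega), mul_zero, zero_mul]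

theorem cg_eq_sum_mul_alternating_sum (m n k i j : ℕ) (hjn : j ≤ n) :
    cg m n k i j = ∑ t ∈ range (k + 1), ch ((n : ℤ) - j) t * (ch ((i : ℤ) + j - k) (i - t) *
      ∑ l ∈ range (k + 1), (-1) ^ l * ch ((i : ℤ) - t) (i - l) * ch ((m : ℤ) - l) (k - l)) := by
  set s : ℤ := (i : ℤ) + j - k
  have vandermonde : ∀ l ∈ range (k + 1), ch s (i - l) * ch ((n : ℤ) - k + l) l
      = ch s (i - l) * ∑ t ∈ range (k + 1), ch ((n : ℤ) - j) t * ch ((j : ℤ) + l - k) (l - t) := by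
    intro l hl
    rcases le_or_gt (k : ℤ) (j + l) with h | h
    · rw [show (n : ℤ) - k + l = (n - j) + (j + l - k) by ring,
        ch_add_eq_sum (by omega) (by omega) (mem_range_succ_iff.1 hl)]
    · rw [ch_of_lt (by omega), zero_mul, zero_mul]
  have revision (l t : ℕ) : ch s (i - l) * ch ((j : ℤ) + l - k) (l - t)
      = ch s (i - t) * ch ((i : ℤ) - t) (i - l) := by
    rw [← ch_mul_ch_sub]
    congr 2 <;> ring
  calc cg m n k i j
      = ∑ l ∈ range (k + 1),
          (-1) ^ l * ch ((m : ℤ) - l) (k - l) * (ch s (i - l) * ch ((n : ℤ) - k + l) l) :=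
        sum_congr rfl fun _ _ => by ring
    _ = ∑ l ∈ range (k + 1), ∑ t ∈ range (k + 1), (-1) ^ l * ch ((m : ℤ) - l) (k - l) *
          (ch ((n : ℤ) - j) t * (ch s (i - t) * ch ((i : ℤ) - t) (i - l))) := by
        refine sum_congr rfl fun l hl => ?_
        rw [vandermonde l hl, mul_sum, mul_sum]
        exact sum_congr rfl fun t _ => by rw [← revision]; ring
    _ = _ := by
        rw [sum_comm]
        simp only [mul_sum]
        exact sum_congr rfl fun _ _ => sum_congr rfl fun _ _ => by ring

theorem stmt_0_general (m n k i j : ℕ) (him : i ≤ m) (hjn : j ≤ n) :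
    cg m n k i j =
      ∑ l ∈ Finset.range (k+1),
        (-1:ℤ)^l * ch ((i:ℤ)+(j:ℤ)-(k:ℤ)) ((i:ℤ)-(l:ℤ))
          * ch ((m:ℤ)-(i:ℤ)) ((k:ℤ)-(l:ℤ)) * ch ((n:ℤ)-(j:ℤ)) (l:ℤ) := by
  rw [cg_eq_sum_mul_alternating_sum m n k i j hjn]
  refine sum_congr rfl fun t ht => ?_
  rcases le_or_gt t i with hti | hti
  · rw [sum_range_neg_one_pow_mul_ch_mul_ch hti him (mem_range_succ_iff.1 ht)]
    ring
  · rw [ch_of_neg (b := (i : ℤ) - t) (by omega)]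
    ring

theorem stmt_0 (m n k i j : ℕ) (hkm : k ≤ m) (hkn : k ≤ n) (him : i ≤ m) (hjn : j ≤ n)
    (hk : k ≤ i + j) (hub : i + j ≤ m + n - k) :
    cg m n k i j =
      ∑ l ∈ Finset.range (k+1),
        (-1:ℤ)^l * ch ((i:ℤ)+(j:ℤ)-(k:ℤ)) ((i:ℤ)-(l:ℤ))
          * ch ((m:ℤ)-(i:ℤ)) ((k:ℤ)-(l:ℤ)) * ch ((n:ℤ)-(j:ℤ)) (l:ℤ) :=
  stmt_0_general m n k i j him hjn
end

section
/- Define c(m,n,k,i,j) = Σ_{l=0}^{k} (-1)^l · C(i+j-k, i-l) · C(m-l, k-l) · C(n-k+l, l). Then the C12 symmetry holds: for all parameters in the domain, c(n,m,k,j,i) = (-1)^k · c(m,n,k,i,j). -/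
open Finset

lemma ch_symm (a b : ℤ) (ha : 0 ≤ a) : ch a b = ch a (a - b) := by
  unfold ch
  by_cases h : 0 ≤ b ∧ b ≤ a
  · rw [if_pos h, if_pos ⟨by omega, by omega⟩]
    have h1 : (a - b).toNat = a.toNat - b.toNat := by omega
    have h2 : b.toNat ≤ a.toNat := by omega
    rw [h1, Nat.choose_symm h2]
  · rw [if_neg h, if_neg (by omega)]

theorem stmt_5 (m n k i j : ℕ) (hkm : k ≤ m) (hkn : k ≤ n) (him : i ≤ m) (hjn : j ≤ n)
    (hk : k ≤ i + j) (hub : i + j ≤ m + n - k) :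
    cg n m k j i = (-1:ℤ)^k * cg m n k i j := by
  unfold cg
  rw [Finset.mul_sum, ← Finset.sum_range_reflect]
  apply Finset.sum_congr rfl
  intro l hl
  simp only [Finset.mem_range] at hl
  have hl' : l ≤ k := by omega
  have hcast : ((k + 1 - 1 - l : ℕ) : ℤ) = (k : ℤ) - l := by
    push_cast [Nat.cast_sub hl']; omega
  have hpow : (-1:ℤ)^(k + 1 - 1 - l) = (-1)^k * (-1)^l := by
    rw [← pow_add, show k + l = (k + 1 - 1 - l) + 2*l from by omega, pow_add]
    simp [pow_mul]
  have hch : ch ((j:ℤ)+(i:ℤ)-(k:ℤ)) ((j:ℤ)-((k:ℤ)-(l:ℤ)))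
      = ch ((i:ℤ)+(j:ℤ)-(k:ℤ)) ((i:ℤ)-(l:ℤ)) := by
    rw [ch_symm _ _ (by push_cast; omega)]
    congr 1 <;> ring
  rw [hcast, hpow]
  rw [show (j:ℤ) - ((k:ℤ) - (l:ℤ)) = (j:ℤ) - ((k:ℤ) - (l:ℤ)) from rfl]
  rw [hch]
  ring_nf
end

section
/- Dixon's identity (classical form): for every even nonnegative integer k, Σ_{l=0}^{k} (-1)^l · C(k,l)^3 = (-1)^{k/2} · (3k/2)! / ((k/2)!)^3. -/
set_option maxRecDepth 100000
set_option maxHeartbeats 4000000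


open Finset

/-- Zeilberger certificate polynomial for Dixon's identity. -/
def Qc (n l : ℤ) : ℤ :=
  -((116+784*n+2084*n^2+2728*n^3+1760*n^4+448*n^5)
   + (-207-1113*n-2214*n^2-1932*n^3-624*n^4)*l
   + (147+594*n+792*n^2+348*n^3)*l^2
   + (-48-132*n-90*n^2)*l^3 + (6+9*n)*l^4)

/-- Telescoping partner for the certificate. -/
def Gf (n : ℕ) : ℕ → ℤ
  | 0 => 0
  | (j+1) => (-1:ℤ)^(j+1) * (((2*n+1).choose j : ℕ) : ℤ)^3 * Qc n (j+1)

lemma keystep (n l : ℕ) :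
    2*(2*(n:ℤ)+1)^3 * (((n:ℤ)+1)^2 * ((-1:ℤ)^l * (((2*n+2).choose l : ℕ) : ℤ)^3)
      + 3*(3*(n:ℤ)+1)*(3*(n:ℤ)+2) * ((-1:ℤ)^l * (((2*n).choose l : ℕ) : ℤ)^3))
    = Gf n (l+1) - Gf n l := by
  match l with
  | 0 =>
    simp only [Gf, Nat.choose_zero_right, Qc]
    push_cast
    ring
  | (j+1) =>
    simp only [Gf]
    by_cases h : j + 1 ≤ 2*n
    · -- generic case : j+1 ≤ 2n
      -- ℕ choose identities
      have a1 := Nat.choose_mul_succ_eq (2*n+1) (j+1)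
      have a2 := Nat.choose_mul_succ_eq (2*n) (j+1)
      have a3 := Nat.choose_succ_right_eq (2*n+1) j
      have s1 : 2*n+1+1-(j+1) = 2*n+1-j := by omega
      have s2 : 2*n+1-(j+1) = 2*n-j := by omega
      rw [s1] at a1
      rw [s2] at a2
      have hsub1 : ((2*n+1-j : ℕ) : ℤ) = 2*(n:ℤ)+1-(j:ℤ) := by
        have hj : j ≤ 2*n+1 := by omega
        push_cast [hj]; ring
      have hsub2 : ((2*n-j : ℕ) : ℤ) = 2*(n:ℤ)-(j:ℤ) := by
        have hj : j ≤ 2*n := by omega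
        push_cast [hj]; ring
      -- cast to ℤ
      have b1 : (((2*n+1).choose (j+1) : ℕ) : ℤ) * (2*(n:ℤ)+2)
          = (((2*n+2).choose (j+1) : ℕ) : ℤ) * (2*(n:ℤ)+1-(j:ℤ)) := by
        have := congrArg (Nat.cast : ℕ → ℤ) a1
        push_cast at this
        rw [hsub1] at this
        convert this using 2 <;> push_cast <;> ring
      have b2 : (((2*n).choose (j+1) : ℕ) : ℤ) * (2*(n:ℤ)+1)
          = (((2*n+1).choose (j+1) : ℕ) : ℤ) * (2*(n:ℤ)-(j:ℤ)) := by
        have := congrArg (Nat.cast : ℕ → ℤ) a2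
        push_cast at this
        rw [hsub2] at this
        convert this using 2 <;> push_cast <;> ring
      have b3 : (((2*n+1).choose (j+1) : ℕ) : ℤ) * ((j:ℤ)+1)
          = (((2*n+1).choose j : ℕ) : ℤ) * (2*(n:ℤ)+1-(j:ℤ)) := by
        have := congrArg (Nat.cast : ℕ → ℤ) a3
        push_cast at this
        rw [hsub1] at this
        convert this using 2 <;> push_cast <;> ring
      -- cubed versions
      have c1 : ((((2*n+2).choose (j+1) : ℕ) : ℤ) * (2*(n:ℤ)+1-(j:ℤ)))^3
          = ((((2*n+1).choose (j+1) : ℕ) : ℤ) * (2*(n:ℤ)+2))^3 := by rw [b1]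
      have c2 : ((((2*n).choose (j+1) : ℕ) : ℤ) * (2*(n:ℤ)+1))^3
          = ((((2*n+1).choose (j+1) : ℕ) : ℤ) * (2*(n:ℤ)-(j:ℤ)))^3 := by rw [b2]
      have c3 : ((((2*n+1).choose j : ℕ) : ℤ) * (2*(n:ℤ)+1-(j:ℤ)))^3
          = ((((2*n+1).choose (j+1) : ℕ) : ℤ) * ((j:ℤ)+1))^3 := by rw [b3]
      -- cancel the nonzero factor
      have hu : (2*(n:ℤ)+1-(j:ℤ)) ≠ 0 := by
        have : (j:ℤ) < 2*n := by exact_mod_cast Nat.lt_of_succ_le h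
        intro hc; omega
      have hv : (2*(n:ℤ)-(j:ℤ)) ≠ 0 := by
        have : (j:ℤ) < 2*n := by exact_mod_cast Nat.lt_of_succ_le h
        intro hc; omega
      have hs : (2*(n:ℤ)+1) ≠ 0 := by positivity
      have hM : (((2*(n:ℤ)+1-(j:ℤ)) * (2*(n:ℤ)-(j:ℤ)) * (2*(n:ℤ)+1))^3) ≠ 0 := by
        exact pow_ne_zero 3 (mul_ne_zero (mul_ne_zero hu hv) hs)
      apply mul_left_cancel₀ hM
      have hsgn : ((-1:ℤ))^(j+1+1) = -(-1:ℤ)^(j+1) := by ring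
      rw [hsgn]
      simp only [Qc]
      push_cast
      linear_combination
        (2*((n:ℤ)+1)^2*(-1:ℤ)^(j+1)*(2*(n:ℤ)+1)^3*((2*(n:ℤ)-(j:ℤ))*(2*(n:ℤ)+1))^3) * c1
        + (6*(3*(n:ℤ)+1)*(3*(n:ℤ)+2)*(-1:ℤ)^(j+1)*(2*(n:ℤ)+1)^3*((2*(n:ℤ)+1-(j:ℤ))*(2*(n:ℤ)-(j:ℤ)))^3) * c2
        + ((-1:ℤ)^(j+1)*(-((116+784*(n:ℤ)+2084*(n:ℤ)^2+2728*(n:ℤ)^3+1760*(n:ℤ)^4+448*(n:ℤ)^5)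
          + (-207-1113*(n:ℤ)-2214*(n:ℤ)^2-1932*(n:ℤ)^3-624*(n:ℤ)^4)*((j:ℤ)+1)
          + (147+594*(n:ℤ)+792*(n:ℤ)^2+348*(n:ℤ)^3)*((j:ℤ)+1)^2
          + (-48-132*(n:ℤ)-90*(n:ℤ)^2)*((j:ℤ)+1)^3 + (6+9*(n:ℤ))*((j:ℤ)+1)^4))*((2*(n:ℤ)-(j:ℤ))*(2*(n:ℤ)+1))^3) * c3
    · -- boundary cases
      have hcase : j = 2*n ∨ j = 2*n+1 ∨ j ≥ 2*n+2 := by omega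
      rcases hcase with hj | hj | hj
      · subst hj
        have e1 : (2*(n:ℕ)+2).choose (2*n+1) = 2*n+2 := by
          have := Nat.choose_succ_self_right (2*n+1)
          simpa using this
        have e2 : (2*(n:ℕ)+1).choose (2*n) = 2*n+1 := by
          have := Nat.choose_succ_self_right (2*n)
          simpa using this
        have e3 : (2*(n:ℕ)).choose (2*n+1) = 0 := Nat.choose_eq_zero_of_lt (by omega)
        have e4 : (2*(n:ℕ)+1).choose (2*n+1) = Nat.choose (2*n+1) (2*n+1) := rfl
        rw [e1, e2, e3, Nat.choose_self]
        have hsgn : ((-1:ℤ))^(2*n+1) = -1 := Odd.neg_one_pow ⟨n, by ring⟩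
        have hsgn2 : ((-1:ℤ))^(2*n+1+1) = 1 := by rw [pow_succ, hsgn]; ring
        rw [hsgn, hsgn2]
        simp only [Qc]
        push_cast
        ring
      · subst hj
        have e1 : (2*(n:ℕ)+2).choose (2*n+1+1) = 1 := by
          have : 2*n+1+1 = 2*n+2 := by omega
          rw [this, Nat.choose_self]
        have e2 : (2*(n:ℕ)).choose (2*n+1+1) = 0 := Nat.choose_eq_zero_of_lt (by omega)
        have e3 : (2*(n:ℕ)+1).choose (2*n+1+1) = 0 := Nat.choose_eq_zero_of_lt (by omega)
        rw [e1, e2, e3, Nat.choose_self]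
        have hsgn : ((-1:ℤ))^(2*n+1+1) = 1 := by
          rw [pow_succ, Odd.neg_one_pow ⟨n, by ring⟩]; ring
        rw [hsgn]
        simp only [Qc]
        push_cast
        ring
      · have e1 : (2*(n:ℕ)+2).choose (j+1) = 0 := Nat.choose_eq_zero_of_lt (by omega)
        have e2 : (2*(n:ℕ)).choose (j+1) = 0 := Nat.choose_eq_zero_of_lt (by omega)
        have e3 : (2*(n:ℕ)+1).choose (j+1) = 0 := Nat.choose_eq_zero_of_lt (by omega)
        have e4 : (2*(n:ℕ)+1).choose j = 0 := Nat.choose_eq_zero_of_lt (by omega)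
        rw [e1, e2, e3, e4]
        push_cast
        ring

/-- The alternating cube sum. -/
def Sd (m : ℕ) : ℤ := ∑ l ∈ Finset.range (2*m+1), (-1:ℤ)^l * (((2*m).choose l : ℕ) : ℤ)^3

lemma sum_keystep (n : ℕ) :
    2*(2*(n:ℤ)+1)^3 * (((n:ℤ)+1)^2 * Sd (n+1)
      + 3*(3*(n:ℤ)+1)*(3*(n:ℤ)+2) * Sd n) = 0 := by
  have htel : ∑ l ∈ Finset.range (2*n+3), (Gf n (l+1) - Gf n l)
      = Gf n (2*n+3) - Gf n 0 := Finset.sum_range_sub (Gf n) (2*n+3)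
  have hend : Gf n (2*n+3) = 0 := by
    have : (2*(n:ℕ)+1).choose (2*n+2) = 0 := Nat.choose_eq_zero_of_lt (by omega)
    simp [Gf, this]
  have hsum : ∑ l ∈ Finset.range (2*n+3),
      (2*(2*(n:ℤ)+1)^3 * (((n:ℤ)+1)^2 * ((-1:ℤ)^l * (((2*n+2).choose l : ℕ) : ℤ)^3)
      + 3*(3*(n:ℤ)+1)*(3*(n:ℤ)+2) * ((-1:ℤ)^l * (((2*n).choose l : ℕ) : ℤ)^3))) = 0 := by
    calc ∑ l ∈ Finset.range (2*n+3),
        (2*(2*(n:ℤ)+1)^3 * (((n:ℤ)+1)^2 * ((-1:ℤ)^l * (((2*n+2).choose l : ℕ) : ℤ)^3)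
        + 3*(3*(n:ℤ)+1)*(3*(n:ℤ)+2) * ((-1:ℤ)^l * (((2*n).choose l : ℕ) : ℤ)^3)))
        = ∑ l ∈ Finset.range (2*n+3), (Gf n (l+1) - Gf n l) := by
          apply Finset.sum_congr rfl
          intro l _
          exact keystep n l
      _ = 0 := by rw [htel, hend]; simp [Gf]
  have hsplit : ∑ l ∈ Finset.range (2*n+3),
      (2*(2*(n:ℤ)+1)^3 * (((n:ℤ)+1)^2 * ((-1:ℤ)^l * (((2*n+2).choose l : ℕ) : ℤ)^3)
      + 3*(3*(n:ℤ)+1)*(3*(n:ℤ)+2) * ((-1:ℤ)^l * (((2*n).choose l : ℕ) : ℤ)^3)))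
      = 2*(2*(n:ℤ)+1)^3 * (((n:ℤ)+1)^2 * Sd (n+1)
        + 3*(3*(n:ℤ)+1)*(3*(n:ℤ)+2) * Sd n) := by
    have h1 : Sd (n+1) = ∑ l ∈ Finset.range (2*n+3), (-1:ℤ)^l * (((2*n+2).choose l : ℕ) : ℤ)^3 := by
      unfold Sd
      have h2 : 2*(n+1) = 2*n+2 := by omega
      rw [h2]
      try norm_num
    have h2 : (Sd n : ℤ) = ∑ l ∈ Finset.range (2*n+3), (-1:ℤ)^l * (((2*n).choose l : ℕ) : ℤ)^3 := by
      unfold Sd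
      rw [Finset.sum_range_succ (n := 2*n+2), Finset.sum_range_succ (n := 2*n+1)]
      have z1 : (2*(n:ℕ)).choose (2*n+1) = 0 := Nat.choose_eq_zero_of_lt (by omega)
      have z2 : (2*(n:ℕ)).choose (2*n+2) = 0 := Nat.choose_eq_zero_of_lt (by omega)
      rw [z1, z2]
      push_cast
      ring
    rw [h1, h2]
    simp only [Finset.mul_sum, ← Finset.sum_add_distrib]
    try apply Finset.sum_congr rfl
    try intro l _
    try ring
  rw [← hsplit, hsum]

lemma t_fac (m : ℕ) : ((3*m).choose m * (2*m).choose m) * m.factorial^3 = (3*m).factorial := by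
  have h1 : (2*m).choose m * m.factorial * m.factorial = (2*m).factorial := by
    have := Nat.choose_mul_factorial_mul_factorial (show m ≤ 2*m by omega)
    have hs : 2*m - m = m := by omega
    rwa [hs] at this
  have h2 : (3*m).choose m * m.factorial * (2*m).factorial = (3*m).factorial := by
    have := Nat.choose_mul_factorial_mul_factorial (show m ≤ 3*m by omega)
    have hs : 3*m - m = 2*m := by omega
    rwa [hs] at this
  calc ((3*m).choose m * (2*m).choose m) * m.factorial^3
      = (3*m).choose m * m.factorial * ((2*m).choose m * m.factorial * m.factorial) := by ring
    _ = (3*m).choose m * m.factorial * (2*m).factorial := by rw [h1]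
    _ = (3*m).factorial := h2

lemma t_rec (n : ℕ) : (n+1)^2 * ((3*(n+1)).choose (n+1) * (2*(n+1)).choose (n+1))
    = 3*(3*n+1)*(3*n+2) * ((3*n).choose n * (2*n).choose n) := by
  have key : ((n+1)^2 * ((3*(n+1)).choose (n+1) * (2*(n+1)).choose (n+1))) * ((n+1) * n.factorial^3)
      = (3*(3*n+1)*(3*n+2) * ((3*n).choose n * (2*n).choose n)) * ((n+1) * n.factorial^3) := by
    have hf1 := t_fac (n+1)
    have hf2 := t_fac n
    have hfs : (n+1).factorial = (n+1) * n.factorial := Nat.factorial_succ n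
    have h3 : (3*(n+1)).factorial = (3*n+3)*((3*n+2)*((3*n+1)*(3*n).factorial)) := by
      have e : 3*(n+1) = (3*n+2)+1 := by omega
      rw [e, Nat.factorial_succ, Nat.factorial_succ, Nat.factorial_succ]
      try ring
    calc ((n+1)^2 * ((3*(n+1)).choose (n+1) * (2*(n+1)).choose (n+1))) * ((n+1) * n.factorial^3)
        = ((3*(n+1)).choose (n+1) * (2*(n+1)).choose (n+1)) * ((n+1)*n.factorial)^3 := by ring
      _ = ((3*(n+1)).choose (n+1) * (2*(n+1)).choose (n+1)) * (n+1).factorial^3 := by rw [hfs]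
      _ = (3*(n+1)).factorial := hf1
      _ = (3*n+3)*((3*n+2)*((3*n+1)*(3*n).factorial)) := h3
      _ = (3*n+3)*((3*n+2)*((3*n+1)*(((3*n).choose n * (2*n).choose n) * n.factorial^3))) := by
          rw [hf2]
      _ = (3*(3*n+1)*(3*n+2) * ((3*n).choose n * (2*n).choose n)) * ((n+1) * n.factorial^3) := by
          ring
  exact Nat.eq_of_mul_eq_mul_right (by positivity) key

lemma dixon_aux (n : ℕ) :
    Sd n = (-1:ℤ)^n * (((3*n).choose n * (2*n).choose n : ℕ) : ℤ) := by
  induction n with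
  | zero => simp [Sd]
  | succ n ih =>
    have hrec := sum_keystep n
    have hz : (2*(2*(n:ℤ)+1)^3) ≠ 0 := by positivity
    have hmain : ((n:ℤ)+1)^2 * Sd (n+1) = -(3*(3*(n:ℤ)+1)*(3*(n:ℤ)+2)) * Sd n := by
      have := mul_eq_zero.mp hrec
      rcases this with h | h
      · exact absurd h hz
      · linarith [h]
    rw [ih] at hmain
    have htr : ((n:ℤ)+1)^2 * (((3*(n+1)).choose (n+1) * (2*(n+1)).choose (n+1) : ℕ) : ℤ)
        = 3*(3*(n:ℤ)+1)*(3*(n:ℤ)+2) * (((3*n).choose n * (2*n).choose n : ℕ) : ℤ) := by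
      have := congrArg (Nat.cast : ℕ → ℤ) (t_rec n)
      push_cast at this
      push_cast
      linarith [this]
    have hcancel : ((n:ℤ)+1)^2 * Sd (n+1)
        = ((n:ℤ)+1)^2 * ((-1:ℤ)^(n+1) * (((3*(n+1)).choose (n+1) * (2*(n+1)).choose (n+1) : ℕ) : ℤ)) := by
      rw [hmain]
      push_cast at htr ⊢
      linear_combination ((-1:ℤ)^n) * htr
    have hne : (((n:ℤ)+1)^2) ≠ 0 := by positivity
    exact mul_left_cancel₀ hne hcancel

theorem stmt_8 (k : ℕ) (hk : Even k) :
    ∑ l ∈ Finset.range (k+1), (-1:ℤ)^l * ((k.choose l : ℤ))^3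
      = (-1:ℤ)^(k/2) * (((3*k/2).factorial / ((k/2).factorial)^3 : ℕ) : ℤ) := by
  obtain ⟨m, hm⟩ := hk
  have hk2 : k = 2*m := by omega
  subst hk2
  have h1 : 2*m/2 = m := by omega
  have h2 : 3*(2*m)/2 = 3*m := by omega
  rw [h1, h2]
  have h3 : (3*m).factorial / m.factorial^3 = (3*m).choose m * (2*m).choose m := by
    have hpos : 0 < m.factorial^3 := by positivity
    rw [← t_fac m, Nat.mul_div_cancel _ hpos]
  rw [h3]
  exact dixon_aux m
end

section
/- Let A, B, C be odd integers each greater than 2. Then A² + 1 = B² + C² holds if and only if there exist positive integers P < Q and N with P·Q = N(N+1) (equivalently ((A-C)/2)·((A+C)/2) = ((B-1)/2)·((B+1)/2)) such that A = P + Q, B = 2N + 1, and C = Q - P. -/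
open Finset

theorem stmt_18 (A B C : ℤ) (hA : Odd A) (hB : Odd B) (hC : Odd C)
    (hA2 : 2 < A) (hB2 : 2 < B) (hC2 : 2 < C) :
    A^2 + 1 = B^2 + C^2 ↔
      ∃ P Q N : ℤ, 0 < P ∧ P < Q ∧ 0 < N ∧ P * Q = N * (N + 1) ∧
        A = P + Q ∧ B = 2*N + 1 ∧ C = Q - P := by
  obtain ⟨a, ha⟩ := hA
  obtain ⟨b, hb⟩ := hB
  obtain ⟨c, hc⟩ := hC
  constructor
  · intro h
    refine ⟨a - c, a + c + 1, b, ?_, ?_, ?_, ?_, by omega, by omega, by omega⟩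
    · -- a > c since A² > C²
      nlinarith [sq_nonneg (A - C), sq_nonneg (A + C)]
    · omega
    · omega
    · nlinarith
  · rintro ⟨P, Q, N, hP, hPQ, hN, hprod, rfl, rfl, rfl⟩
    nlinarith
end
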